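/- Let ϖ ∈ ℝ satisfy the Diophantine condition: there exist c₁ > 0 and d > 1 with |j·ϖ/π − i| ≥ c₁⁻¹/j^d for all integers i and all j ≥ 1. Let ε > 0 and let (f_n) satisfy |f_n − f_0 − n·ϖ| ≤ K·n²·(log ε⁻¹)⁻¹ mod π for some K > 0. Then there exists c₃ > 0 (depending on c₁, d, K, π but not on ε) such that for all sufficiently small ε and all 1 ≤ n ≤ ⌊c₃⁻¹·(log ε⁻¹)^{1/(2+d)}⌋, one has dist(f_n − f_0, πℤ) ≥ (c₁⁻¹/(2·m^d))·π⁻¹·π where m = ⌊c₃⁻¹·(log ε⁻¹)^{1/(2+d)}⌋; in particular dist(f_n − f_0, πℤ) ≥ (2π c₁ m^d)⁻¹·π > (log ε⁻¹)^{−1} · (log ε⁻¹)^{(1+d)/(2+d)} / (2π c₁ c₃^{d}) for large log ε⁻¹. -/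

import Mathlib

/-!
Write `δ = c₁⁻¹ / (2 m^d)`. By the Diophantine condition, `n ϖ` stays at distance at least
`π c₁⁻¹ / n^d ≥ 2δ` from `πℤ` for `1 ≤ n ≤ m`, while `f n - f 0` differs from `n ϖ` modulo `π` by at
most `K n² / log ε⁻¹`. Choosing `c₃ = (2 K c₁)^{1/(2+d)}` makes `2 K c₁ m^{2+d} ≤ log ε⁻¹`, so this
error is at most `δ` and `f n - f 0` stays at distance at least `δ` from `πℤ`.
-/

open Real

lemma mul_floor_inv_rpow_mul_rpow_rpow_le {a p L : ℝ} (ha : 0 < a) (hp : 0 < p) (hL : 0 ≤ L) :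
    a * (⌊(a ^ (1 / p))⁻¹ * L ^ (1 / p)⌋₊ : ℝ) ^ p ≤ L := by
  have hfloor : (⌊(a ^ (1 / p))⁻¹ * L ^ (1 / p)⌋₊ : ℝ) ≤ (L / a) ^ p⁻¹ := by
    calc (⌊(a ^ (1 / p))⁻¹ * L ^ (1 / p)⌋₊ : ℝ) ≤ (a ^ (1 / p))⁻¹ * L ^ (1 / p) :=
          Nat.floor_le (by positivity)
      _ = (L / a) ^ p⁻¹ := by rw [div_rpow hL ha.le, one_div]; ring
  rw [le_rpow_inv_iff_of_pos (by positivity) (by positivity) hp, le_div_iff₀ ha] at hfloor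
  linarith

lemma pi_mul_div_rpow_le_abs_mul_sub_intCast_mul_pi {c d ϖ : ℝ} {i : ℤ} {j : ℕ}
    (h : c / (j : ℝ) ^ d ≤ |(j : ℝ) * (ϖ / π) - (i : ℝ)|) :
    π * c / (j : ℝ) ^ d ≤ |(j : ℝ) * ϖ - (i : ℝ) * π| := by
  have hscale : (j : ℝ) * ϖ - (i : ℝ) * π = π * ((j : ℝ) * (ϖ / π) - (i : ℝ)) := by
    field_simp
  rw [hscale, abs_mul, abs_of_pos pi_pos, mul_div_assoc]
  exact mul_le_mul_of_nonneg_left h pi_pos.le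

lemma mul_sq_mul_inv_le_of_mul_rpow_le {c K d L : ℝ} {n m : ℕ} (hc : 0 < c) (hK : 0 < K)
    (hn : 1 ≤ n) (hnm : n ≤ m) (hL : 2 * K * c * (m : ℝ) ^ (2 + d) ≤ L) :
    K * (n : ℝ) ^ 2 * L⁻¹ ≤ c⁻¹ / (2 * (m : ℝ) ^ d) := by
  have hm : (0 : ℝ) < m := by exact_mod_cast hn.trans hnm
  have hpow : (m : ℝ) ^ (2 + d) = (m : ℝ) ^ 2 * (m : ℝ) ^ d := by
    rw [rpow_add hm, rpow_two]
  have hL₀ : 0 < L := lt_of_lt_of_le (by positivity) hL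
  calc K * (n : ℝ) ^ 2 * L⁻¹ ≤ K * (m : ℝ) ^ 2 * (2 * K * c * (m : ℝ) ^ (2 + d))⁻¹ := by
        gcongr
    _ = c⁻¹ / (2 * (m : ℝ) ^ d) := by
        rw [hpow]
        field_simp

lemma le_abs_of_two_mul_le_abs_sub {x e δ : ℝ} (hsep : 2 * δ ≤ |x - e|) (he : |e| ≤ δ) :
    δ ≤ |x| := by
  have := abs_sub x e
  linarith

/-- Quantitative separation (Proposition 6.5): for a Diophantine rotation number ϖ/π,
the orbit f_n = f_0 + nϖ + O(n² log⁻¹ ε⁻¹) mod π stays at distance ≥ c₁⁻¹/(2 m^d)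
from f_0 modulo π for all 1 ≤ n ≤ m = ⌊c₃⁻¹ (log ε⁻¹)^{1/(2+d)}⌋. -/
theorem stmt12 (c₁ d K ϖ : ℝ) (hc : 0 < c₁) (hd : 1 < d) (hK : 0 < K)
    (hdio : ∀ (i : ℤ) (j : ℕ), 1 ≤ j →
      c₁⁻¹ / (j : ℝ) ^ d ≤ |(j : ℝ) * (ϖ / Real.pi) - (i : ℝ)|) :
    ∃ c₃ > 0, ∃ ε₀ > 0, ∀ ε : ℝ, 0 < ε → ε ≤ ε₀ →
      ∀ f : ℕ → ℝ,
        (∀ n : ℕ, ∃ k : ℤ,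
          |f n - f 0 - (n : ℝ) * ϖ - (k : ℝ) * Real.pi| ≤ K * (n : ℝ) ^ 2 * (Real.log ε⁻¹)⁻¹) →
        ∀ n : ℕ, 1 ≤ n → n ≤ ⌊c₃⁻¹ * (Real.log ε⁻¹) ^ ((1:ℝ) / (2 + d))⌋₊ →
          ∀ k : ℤ,
            c₁⁻¹ / (2 * ((⌊c₃⁻¹ * (Real.log ε⁻¹) ^ ((1:ℝ) / (2 + d))⌋₊ : ℝ)) ^ d)
              ≤ |f n - f 0 - (k : ℝ) * Real.pi| := by
  refine ⟨(2 * K * c₁) ^ ((1 : ℝ) / (2 + d)), by positivity, 1 / 2, by norm_num,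
    fun ε hε hε₀ f horb n hn hnm k => ?_⟩
  have hL : 0 < log ε⁻¹ := log_pos ((one_lt_inv₀ hε).2 (by linarith))
  set m := ⌊((2 * K * c₁) ^ ((1 : ℝ) / (2 + d)))⁻¹ * (log ε⁻¹) ^ ((1 : ℝ) / (2 + d))⌋₊
  have hmL : 2 * K * c₁ * (m : ℝ) ^ (2 + d) ≤ log ε⁻¹ :=
    mul_floor_inv_rpow_mul_rpow_rpow_le (by positivity) (by linarith) hL.le
  obtain ⟨k', hk'⟩ := horb n
  refine le_abs_of_two_mul_le_abs_sub (e := f n - f 0 - n * ϖ - k' * π) ?_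
    (hk'.trans (mul_sq_mul_inv_le_of_mul_rpow_le hc hK hn hnm hmL))
  calc 2 * (c₁⁻¹ / (2 * (m : ℝ) ^ d)) = 1 * c₁⁻¹ / (m : ℝ) ^ d := by field_simp
    _ ≤ π * c₁⁻¹ / (m : ℝ) ^ d := by gcongr; linarith [pi_gt_three]
    _ ≤ π * c₁⁻¹ / (n : ℝ) ^ d := by gcongr
    _ ≤ |(n : ℝ) * ϖ - ((k - k' : ℤ) : ℝ) * π| :=
        pi_mul_div_rpow_le_abs_mul_sub_intCast_mul_pi (hdio _ n hn)
    _ = |f n - f 0 - k * π - (f n - f 0 - n * ϖ - k' * π)| := by push_cast; ring_nf
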